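/- arXiv:math/0703062 — 2 statements merged into one kernel-verified Lean document; each statement's English description precedes it below -/
import Mathlib

section
/- Let W_1,…,W_n be the weighted left creation operators on the full Fock space F²(H_n) defined by W_i e_α = (√(b_α)/√(b_{g_i α})) e_{g_i α}, where the b_α arise from a positive regular free holomorphic function f. Then for every word β ∈ F_n^+ the operator norm satisfies ‖W_β‖ = 1/√(b_β). -/
open Filter Topology
open scoped ComplexConjugate ENNReal

namespace NCDomain

/-- Words in the free monoid `F_n^+` on `n` generators. -/
abbrev Word (n : ℕ) := FreeMonoid (Fin n)

instance {n : ℕ} : DecidableEq (Word n) :=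
  inferInstanceAs (DecidableEq (List (Fin n)))

/-- The length `|α|` of a word. -/
def wordLen {n : ℕ} (α : Word n) : ℕ := FreeMonoid.length α

section AuxWords
variable {n : ℕ}

lemma flatten_inj : ∀ (l1 l2 : List (List (Fin n))), l1.flatten = l2.flatten →
    l1.map List.length = l2.map List.length → l1 = l2 := by
  intro l1
  induction l1 with
  | nil => intro l2 h hl; cases l2 <;> simp_all
  | cons a t ih =>
    intro l2 h hl
    cases l2 with
    | nil => simp_all
    | cons b t2 =>
      simp only [List.flatten_cons, List.map_cons, List.cons.injEq] at h hl
      obtain ⟨hab, ht⟩ := List.append_inj h (by rw [hl.1])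
      rw [hab, ih t2 ht hl.2]

lemma word_eq_one_iff {β : Word n} : β = 1 ↔ FreeMonoid.toList β = [] := by
  constructor
  · rintro rfl; rfl
  · intro h; apply FreeMonoid.toList.injective; simpa using h

lemma mul_ne_one_left {β α : Word n} (hβ : β ≠ 1) : β * α ≠ 1 := by
  intro h
  apply hβ
  rw [word_eq_one_iff] at h ⊢
  rw [FreeMonoid.toList_mul] at h
  exact List.append_eq_nil_iff.mp h |>.1

lemma prod_eq_one_nil {L : List (Word n)} (h : L.prod = 1) (hne : ∀ w ∈ L, w ≠ 1) : L = [] := by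
  cases L with
  | nil => rfl
  | cons w t =>
    exfalso
    have h2 := congrArg FreeMonoid.toList h
    rw [FreeMonoid.toList_prod] at h2
    have h3 : ∀ l ∈ (w :: t).map FreeMonoid.toList, l = [] := by
      rw [← List.flatten_eq_nil_iff]; simpa using h2
    have : FreeMonoid.toList w = [] := h3 _ (by simp)
    exact hne w (by simp) (word_eq_one_iff.mpr this)

instance factsFinite (α : Word n) :
    Finite {L : List (Word n) // L.prod = α ∧ ∀ w ∈ L, w ≠ 1} := by
  apply Finite.of_injective (β := Composition (wordLen α))
    (f := fun L => ⟨L.1.map FreeMonoid.length, ?_, ?_⟩)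
  · intro L M h
    have hblocks : L.1.map FreeMonoid.length = M.1.map FreeMonoid.length :=
      congrArg Composition.blocks h
    ext1
    have hf : (L.1.map FreeMonoid.toList).flatten = (M.1.map FreeMonoid.toList).flatten := by
      rw [← FreeMonoid.toList_prod, ← FreeMonoid.toList_prod, L.2.1, M.2.1]
    have hl : (L.1.map FreeMonoid.toList).map List.length
        = (M.1.map FreeMonoid.toList).map List.length := by
      rw [List.map_map, List.map_map]
      exact hblocks
    have := flatten_inj _ _ hf hl
    exact List.map_injective_iff.mpr FreeMonoid.toList.injective this
  · intro i hi
    simp only [List.mem_map] at hi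
    obtain ⟨w, hw, rfl⟩ := hi
    have : w ≠ 1 := L.2.2 w hw
    rw [Ne, word_eq_one_iff] at this
    simpa [FreeMonoid.length, List.length_pos_iff] using this
  · have := congrArg FreeMonoid.toList L.2.1
    rw [FreeMonoid.toList_prod] at this
    have h2 := congrArg List.length this
    rw [List.length_flatten, List.map_map] at h2
    exact h2

end AuxWords

/-- The coefficients `b_α`, defined by `b_{g_0} = 1` and, for `|α| ≥ 1`,
`b_α = Σ_{j=1}^{|α|} Σ_{γ_1⋯γ_j = α, |γ_i| ≥ 1} a_{γ_1}⋯a_{γ_j}`, the sum running over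
all ordered factorizations of `α` into nonempty words. -/
noncomputable def bCoeff {n : ℕ} (a : Word n → ℝ) (α : Word n) : ℝ :=
  if α = 1 then 1
  else ∑' L : {L : List (Word n) // L.prod = α ∧ ∀ w ∈ L, w ≠ 1}, (L.1.map a).prod

/-- `f = Σ_{|α|≥1} a_α X_α` is a positive regular free holomorphic function:
`a_{g_0} = 0`, `a_α ≥ 0`, `a_{g_i} > 0`, and
`limsup_{k→∞} (Σ_{|α|=k} |a_α|²)^{1/(2k)} < ∞`. -/
def PosRegular {n : ℕ} (a : Word n → ℝ) : Prop :=
  a 1 = 0 ∧ (∀ α, 0 ≤ a α) ∧ (∀ i : Fin n, 0 < a (FreeMonoid.of i)) ∧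
    ∃ C : ℝ, ∀ᶠ k in atTop,
      (∑' α : {β : Word n // wordLen β = k}, (a α.1) ^ 2) ≤ C ^ (2 * k)

section AuxB
variable {n : ℕ}

lemma bCoeff_one (a : Word n → ℝ) : bCoeff a 1 = 1 := if_pos rfl

lemma bCoeff_pos (a : Word n → ℝ) (h0 : ∀ α, 0 ≤ a α) (hof : ∀ i, 0 < a (FreeMonoid.of i)) :
    ∀ α : Word n, 0 < bCoeff a α := by
  intro α
  rw [bCoeff]
  split
  · norm_num
  · rename_i hα
    haveI := Fintype.ofFinite {L : List (Word n) // L.prod = α ∧ ∀ w ∈ L, w ≠ 1}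
    rw [tsum_fintype]
    have hL0 : ((FreeMonoid.toList α).map FreeMonoid.of).prod = α ∧
        ∀ w ∈ (FreeMonoid.toList α).map FreeMonoid.of, w ≠ 1 := by
      constructor
      · apply FreeMonoid.toList.injective
        rw [FreeMonoid.toList_prod, List.map_map]
        have : FreeMonoid.toList ∘ (FreeMonoid.of (α := Fin n)) = fun i => [i] := rfl
        rw [this]
        induction (FreeMonoid.toList α) with
        | nil => rfl
        | cons x l ih => simp_all
      · intro w hw
        simp only [List.mem_map] at hw
        obtain ⟨i, _, rfl⟩ := hw
        rw [Ne, word_eq_one_iff]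
        simp [FreeMonoid.toList_of]
    apply Finset.sum_pos'
    · intro L _
      exact List.prod_nonneg (by
        intro x hx
        obtain ⟨w, _, rfl⟩ := List.mem_map.mp hx
        exact h0 w)
    · refine ⟨⟨_, hL0⟩, Finset.mem_univ _, ?_⟩
      apply List.prod_pos
      intro x hx
      rw [List.map_map] at hx
      obtain ⟨i, _, rfl⟩ := List.mem_map.mp hx
      exact hof i

lemma bCoeff_mul_le (a : Word n → ℝ) (h0 : ∀ α, 0 ≤ a α) (β α : Word n) :
    bCoeff a β * bCoeff a α ≤ bCoeff a (β * α) := by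
  by_cases hβ : β = 1
  · simp [hβ, bCoeff_one]
  by_cases hα : α = 1
  · simp [hα, bCoeff_one]
  have hβα : β * α ≠ 1 := mul_ne_one_left hβ
  rw [bCoeff, bCoeff, bCoeff, if_neg hβ, if_neg hα, if_neg hβα]
  haveI := Fintype.ofFinite {L : List (Word n) // L.prod = β ∧ ∀ w ∈ L, w ≠ 1}
  haveI := Fintype.ofFinite {L : List (Word n) // L.prod = α ∧ ∀ w ∈ L, w ≠ 1}
  haveI := Fintype.ofFinite {L : List (Word n) // L.prod = β * α ∧ ∀ w ∈ L, w ≠ 1}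
  rw [tsum_fintype, tsum_fintype, tsum_fintype]
  set e : {L : List (Word n) // L.prod = β ∧ ∀ w ∈ L, w ≠ 1} ×
      {L : List (Word n) // L.prod = α ∧ ∀ w ∈ L, w ≠ 1} →
      {L : List (Word n) // L.prod = β * α ∧ ∀ w ∈ L, w ≠ 1} :=
    fun p => ⟨p.1.1 ++ p.2.1, by rw [List.prod_append, p.1.2.1, p.2.2.1], by
      intro w hw
      rcases List.mem_append.mp hw with h | h
      exacts [p.1.2.2 w h, p.2.2.2 w h]⟩ with he_def
  have he : Function.Injective e := by
    rintro ⟨⟨L1, hL1, hL1'⟩, ⟨L2, hL2, hL2'⟩⟩ ⟨⟨M1, hM1, hM1'⟩, ⟨M2, hM2, hM2'⟩⟩ h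
    have happ : L1 ++ L2 = M1 ++ M2 := congrArg Subtype.val h
    have key : L1 = M1 := by
      rcases List.append_eq_append_iff.mp happ with ⟨a', ha1, _⟩ | ⟨c', ha1, _⟩
      · -- M1 = L1 ++ a'
        have hth : β = β * a'.prod := by
          conv_lhs => rw [← hM1, ha1]
          rw [List.prod_append, hL1]
        have ha'1 : (1 : Word n) = a'.prod := mul_left_cancel (a := β) (by rw [mul_one]; exact hth)
        have : a' = [] := prod_eq_one_nil ha'1.symm (fun w hw => hM1' w (by rw [ha1]; simp [hw]))
        rw [ha1, this, List.append_nil]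
      · -- L1 = M1 ++ c'
        have hth : β = β * c'.prod := by
          conv_lhs => rw [← hL1, ha1]
          rw [List.prod_append, hM1]
        have hc1 : (1 : Word n) = c'.prod := mul_left_cancel (a := β) (by rw [mul_one]; exact hth)
        have : c' = [] := prod_eq_one_nil hc1.symm (fun w hw => hL1' w (by rw [ha1]; simp [hw]))
        rw [ha1, this, List.append_nil]
    have : L2 = M2 := by
      apply List.append_cancel_left (as := L1)
      rw [happ, key]
    ext1 <;> simp [key, this]
  calc (∑ L1 : {L : List (Word n) // L.prod = β ∧ ∀ w ∈ L, w ≠ 1}, (L1.1.map a).prod) *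
        ∑ L2 : {L : List (Word n) // L.prod = α ∧ ∀ w ∈ L, w ≠ 1}, (L2.1.map a).prod
      = ∑ p : {L : List (Word n) // L.prod = β ∧ ∀ w ∈ L, w ≠ 1} ×
          {L : List (Word n) // L.prod = α ∧ ∀ w ∈ L, w ≠ 1}, ((e p).1.map a).prod := by
        rw [← Finset.univ_product_univ, Finset.sum_product, Finset.sum_mul_sum]
        refine Finset.sum_congr rfl fun L1 _ => Finset.sum_congr rfl fun L2 _ => ?_
        rw [he_def]
        simp [List.map_append, List.prod_append]
    _ = ∑ L ∈ Finset.univ.image e, (L.1.map a).prod := by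
        rw [Finset.sum_image (fun x _ y _ h => he h)]
    _ ≤ ∑ L : {L : List (Word n) // L.prod = β * α ∧ ∀ w ∈ L, w ≠ 1}, (L.1.map a).prod := by
        apply Finset.sum_le_sum_of_subset_of_nonneg (Finset.subset_univ _)
        intro L _ _
        exact List.prod_nonneg (by
          intro x hx
          obtain ⟨w, _, rfl⟩ := List.mem_map.mp hx
          exact h0 w)

end AuxB

/-- For a tuple `T` of operators and a word `α = g_{i_1}⋯g_{i_k}`,
the product `T_α = T_{i_1}⋯T_{i_k}` (and `T_{g_0} = I`). -/
noncomputable def opWord {n : ℕ} {H : Type*} [NormedAddCommGroup H] [NormedSpace ℂ H]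
    (T : Fin n → H →L[ℂ] H) (α : Word n) : H →L[ℂ] H :=
  ((FreeMonoid.toList α).map T).prod

/-- The full Fock space `F²(H_n)`, realized as `ℓ²` over the free monoid. -/
abbrev Fock (n : ℕ) : Type := lp (fun _ : Word n => ℂ) 2

/-- The canonical orthonormal basis vector `e_α` of the Fock space. -/
noncomputable def fockBasis {n : ℕ} (α : Word n) : Fock n := lp.single 2 α (1 : ℂ)

/-- `W` is the tuple of weighted left creation operators associated with `f = Σ a_α X_α`:
`W_i e_α = √(b_α / b_{g_i α}) e_{g_i α}`. -/
def IsWeightedShift {n : ℕ} (a : Word n → ℝ) (W : Fin n → Fock n →L[ℂ] Fock n) : Prop :=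
  ∀ (i : Fin n) (α : Word n),
    W i (fockBasis α) =
      (Real.sqrt (bCoeff a α / bCoeff a (FreeMonoid.of i * α)) : ℂ) •
        fockBasis (FreeMonoid.of i * α)

section AuxFock
variable {n : ℕ}

lemma norm_fockBasis (α : Word n) : ‖(fockBasis α : Fock n)‖ = 1 := by
  have := lp.norm_single (E := fun _ : Word n => ℂ) (p := 2)
    (by norm_num) α (1:ℂ)
  simpa [fockBasis] using this

lemma orthonormal_fockBasis : Orthonormal ℂ (fockBasis (n := n)) := by
  rw [orthonormal_iff_ite]
  intro i j
  rw [fockBasis, lp.inner_single_left]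
  simp only [fockBasis, lp.single_apply]
  by_cases h : i = j <;> simp [h, eq_comm]

lemma opWord_one {H : Type*} [NormedAddCommGroup H] [NormedSpace ℂ H]
    (T : Fin n → H →L[ℂ] H) : opWord T (1 : Word n) = 1 := rfl

lemma opWord_of_mul {H : Type*} [NormedAddCommGroup H] [NormedSpace ℂ H]
    (T : Fin n → H →L[ℂ] H) (i : Fin n) (γ : Word n) (x : H) :
    opWord T (FreeMonoid.of i * γ) x = T i (opWord T γ x) := by
  have : opWord T (FreeMonoid.of i * γ) = T i * opWord T γ := by
    rw [opWord, opWord, FreeMonoid.toList_mul, List.map_append, List.prod_append]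
    rfl
  rw [this]
  rfl

lemma opWord_apply (a : Word n → ℝ) (hpos : ∀ α, 0 < bCoeff a α)
    (W : Fin n → Fock n →L[ℂ] Fock n) (hW : IsWeightedShift a W) (β α : Word n) :
    opWord W β (fockBasis α) =
      (Real.sqrt (bCoeff a α / bCoeff a (β * α)) : ℂ) • fockBasis (β * α) := by
  induction β using FreeMonoid.inductionOn' with
  | one =>
    rw [opWord_one, one_mul, div_self (hpos α).ne']
    simp
  | of_mul i γ ih =>
    rw [opWord_of_mul, ih, map_smul, hW i (γ * α), smul_smul, mul_assoc]
    congr 1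
    rw [← Complex.ofReal_mul]
    congr 1
    rw [← Real.sqrt_mul (div_pos (hpos α) (hpos _)).le]
    congr 1
    have h1 := (hpos (γ * α)).ne'
    have h2 := (hpos (FreeMonoid.of i * (γ * α))).ne'
    field_simp

lemma norm_sq_orthonormal_sum {ι : Type*} (v : ι → Fock n) (hv : Orthonormal ℂ v)
    (l : ι → ℂ) (s : Finset ι) :
    ‖∑ α ∈ s, l α • v α‖ ^ 2 = ∑ α ∈ s, ‖l α‖ ^ 2 := by
  have h := hv.inner_sum l l s
  rw [inner_self_eq_norm_sq_to_K] at h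
  have h2 : ∑ α ∈ s, (starRingEnd ℂ) (l α) * l α = ((∑ α ∈ s, ‖l α‖ ^ 2 : ℝ) : ℂ) := by
    push_cast
    exact Finset.sum_congr rfl fun α _ => RCLike.conj_mul (l α)
  rw [h2] at h
  have h4 := congrArg Complex.re h
  simpa [← Complex.ofReal_pow] using h4

end AuxFock

/-- for the weighted left creation operators `W_1, …, W_n` associated with a
positive regular free holomorphic function `f`, the operator norm satisfies
`‖W_β‖ = 1/√(b_β)` for every word `β`. -/
theorem opWord_norm {n : ℕ} (a : Word n → ℝ) (hreg : PosRegular a)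
    (W : Fin n → Fock n →L[ℂ] Fock n) (hW : IsWeightedShift a W) :
    ∀ β : Word n, ‖opWord W β‖ = 1 / Real.sqrt (bCoeff a β) := by
  obtain ⟨-, h0, hof, -⟩ := hreg
  have hpos := bCoeff_pos a h0 hof
  intro β
  set T := opWord W β with hT
  set c : ℝ := 1 / Real.sqrt (bCoeff a β) with hc
  have hsβ : 0 < Real.sqrt (bCoeff a β) := Real.sqrt_pos.mpr (hpos β)
  have hcnn : 0 ≤ c := by positivity
  have hwle : ∀ α : Word n, Real.sqrt (bCoeff a α / bCoeff a (β * α)) ≤ c := by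
    intro α
    rw [hc, one_div, ← Real.sqrt_inv]
    apply Real.sqrt_le_sqrt
    rw [div_le_iff₀ (hpos (β * α)), inv_mul_eq_div, le_div_iff₀ (hpos β)]
    calc bCoeff a α * bCoeff a β = bCoeff a β * bCoeff a α := mul_comm _ _
      _ ≤ bCoeff a (β * α) := bCoeff_mul_le a h0 β α
  have hub : ∀ x : Fock n, ‖T x‖ ≤ c * ‖x‖ := by
    intro x
    have hx : HasSum (fun α : Word n => lp.single 2 α (x α)) x :=
      lp.hasSum_single ENNReal.ofNat_ne_top x
    have hsingle : ∀ α : Word n, (lp.single 2 α (x α) : Fock n) = x α • fockBasis α := by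
      intro α
      rw [fockBasis, ← lp.single_smul]
      norm_num
    have key : ∀ s : Finset (Word n),
        ‖T (∑ α ∈ s, lp.single 2 α (x α))‖ ≤ c * ‖∑ α ∈ s, lp.single 2 α (x α)‖ := by
      intro s
      have hTsum : T (∑ α ∈ s, lp.single 2 α (x α)) =
          ∑ α ∈ s, (x α * (Real.sqrt (bCoeff a α / bCoeff a (β * α)) : ℂ)) •
            ((fockBasis ∘ (fun α : Word n => β * α)) α) := by
        rw [map_sum]
        refine Finset.sum_congr rfl fun α _ => ?_
        rw [hsingle, map_smul, hT, opWord_apply a hpos W hW, smul_smul]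
        rfl
      have hinj : Function.Injective (fun α : Word n => β * α) := fun u v h =>
        mul_left_cancel h
      have hON := (orthonormal_fockBasis (n := n)).comp _ hinj
      have hT2 : ‖T (∑ α ∈ s, lp.single 2 α (x α))‖ ^ 2
          = ∑ α ∈ s, ‖x α * (Real.sqrt (bCoeff a α / bCoeff a (β * α)) : ℂ)‖ ^ 2 := by
        rw [hTsum, norm_sq_orthonormal_sum _ hON]
      have hx2 : ‖∑ α ∈ s, lp.single 2 α (x α)‖ ^ 2 = ∑ α ∈ s, ‖x α‖ ^ 2 := by
        calc ‖∑ α ∈ s, lp.single 2 α (x α)‖ ^ 2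
            = ‖∑ α ∈ s, x α • fockBasis α‖ ^ 2 := by
              congr 2; exact Finset.sum_congr rfl fun α _ => hsingle α
          _ = ∑ α ∈ s, ‖x α‖ ^ 2 := norm_sq_orthonormal_sum _ orthonormal_fockBasis _ s
      have hle : ‖T (∑ α ∈ s, lp.single 2 α (x α))‖ ^ 2
          ≤ (c * ‖∑ α ∈ s, lp.single 2 α (x α)‖) ^ 2 := by
        rw [hT2, mul_pow, hx2, Finset.mul_sum]
        apply Finset.sum_le_sum
        intro α _
        rw [norm_mul, mul_pow]
        have hwn : ‖((Real.sqrt (bCoeff a α / bCoeff a (β * α)) : ℝ) : ℂ)‖ ≤ c := by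
          rw [Complex.norm_real, Real.norm_eq_abs, abs_of_nonneg (Real.sqrt_nonneg _)]
          exact hwle α
        have h4 : ‖((Real.sqrt (bCoeff a α / bCoeff a (β * α)) : ℝ) : ℂ)‖ ^ 2 ≤ c ^ 2 :=
          pow_le_pow_left₀ (norm_nonneg _) hwn 2
        rw [mul_comm (c ^ 2)]
        exact mul_le_mul_of_nonneg_left h4 (sq_nonneg _)
      have h1 := Real.sqrt_le_sqrt hle
      rwa [Real.sqrt_sq (norm_nonneg _), Real.sqrt_sq (by positivity)] at h1
    have h2 : Tendsto (fun s : Finset (Word n) => ‖T (∑ α ∈ s, lp.single 2 α (x α))‖)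
        atTop (𝓝 ‖T x‖) := ((T.continuous.tendsto x).comp hx).norm
    have h3 : Tendsto (fun s : Finset (Word n) => c * ‖∑ α ∈ s, lp.single 2 α (x α)‖)
        atTop (𝓝 (c * ‖x‖)) := hx.norm.const_mul c
    exact le_of_tendsto_of_tendsto' h2 h3 key
  have hlow : c ≤ ‖T‖ := by
    have he1 : T (fockBasis 1) =
        ((Real.sqrt ((bCoeff a β)⁻¹) : ℝ) : ℂ) • fockBasis β := by
      rw [hT, opWord_apply a hpos W hW β 1, mul_one, bCoeff_one, one_div]
    have h1 : ‖T (fockBasis 1)‖ = c := by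
      rw [he1, norm_smul, norm_fockBasis, Complex.norm_real, Real.norm_eq_abs,
        abs_of_nonneg (Real.sqrt_nonneg _), mul_one, Real.sqrt_inv, hc, one_div]
    calc c = ‖T (fockBasis 1)‖ := h1.symm
      _ ≤ ‖T‖ * ‖fockBasis 1‖ := T.le_opNorm _
      _ = ‖T‖ := by rw [norm_fockBasis, mul_one]
  exact le_antisymm (T.opNorm_le_bound hcnn hub) hlow

end NCDomain
end

section
/- Let T = (T_1,…,T_n) be an n-tuple of bounded operators on a Hilbert space H with Σ_{|α|≥1} a_α T_α T_α* ≤ I (WOT convergence), and let Φ_{f,T}(X) = Σ_{|α|≥1} a_α T_α X T_α*. Then the sequence Φ_{f,T}^m(I) is decreasing in the positive operator order, Q := SOT-lim_m Φ_{f,T}^m(I) exists, and Σ_{β∈F_n^+} b_β T_β (I − Φ_{f,T}(I)) T_β* = I − Q in the strong operator topology. -/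
/-!
`Φ` is linear and positive, so `Φ 1 ≤ 1` makes `Φ^[m] 1` a decreasing sequence of positive
operators, and such a sequence converges strongly: its increments `D` are positive with summable
quadratic forms, and `0 ≤ D ≤ C` gives `‖D x‖² ≤ C re ⟪D x, x⟫`, which turns summability of the
quadratic forms into norm convergence.

Expanding `Φ^[m]` along words, `⟪Φ^[m] (1 - Φ 1) x, x⟫` is the sum over lists `[γ₁, …, γₘ]` of
`a_{γ₁} ⋯ a_{γₘ} ⟪(1 - Φ 1) T_γ* x, T_γ* x⟫` with `γ = γ₁ ⋯ γₘ`. Summing over `m` (in `ℝ≥0∞`, so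
that everything may be rearranged) and grouping the lists by their product gives
`Σ_β b_β ⟪(1 - Φ 1) T_β* x, T_β* x⟫ = ⟪x, x⟫ - ⟪Q x, x⟫`. By polarization this identity of
quadratic forms of positive operators determines the strong sum.
-/

open Filter Topology
open scoped ComplexConjugate ENNReal

namespace NCDomain

/-- `Φ` is the completely positive map `Φ(X) = Σ_{|α|≥1} c_α T_α X T_α*`, the series
converging in the weak operator topology. -/
def IsPhi {n : ℕ} {H : Type*} [NormedAddCommGroup H] [InnerProductSpace ℂ H] [CompleteSpace H]
    (c : Word n → ℝ) (T : Fin n → H →L[ℂ] H) (Φ : (H →L[ℂ] H) → (H →L[ℂ] H)) : Prop :=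
  ∀ (X : H →L[ℂ] H) (x y : H),
    HasSum (fun α : {β : Word n // β ≠ 1} =>
      (c α.1 : ℂ) * (inner ℂ (opWord T α.1 (X ((opWord T α.1).adjoint x))) y : ℂ))
      ((inner ℂ (Φ X x) y : ℂ))

open scoped InnerProductSpace ComplexOrder
open RCLike ContinuousLinearMap

section RCLike

variable {𝕜 H : Type*} [RCLike 𝕜] [NormedAddCommGroup H] [InnerProductSpace 𝕜 H]

theorem norm_sq_apply_le_of_isPositive {D : H →L[𝕜] H} (hD : D.IsPositive) {C : ℝ}
    (hC : ∀ y, re ⟪D y, y⟫_𝕜 ≤ C * ‖y‖ ^ 2) (x : H) :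
    ‖D x‖ ^ 2 ≤ C * re ⟪D x, x⟫_𝕜 := by
  rcases eq_or_ne (D x) 0 with hx | hx
  · simp [hx]
  -- the claim is the discriminant condition of `t ↦ re ⟪D (x + t • D x), x + t • D x⟫ ≥ 0`
  have hquad : ∀ t : ℝ, 0 ≤ re ⟪D (D x), D x⟫_𝕜 * (t * t) + 2 * ‖D x‖ ^ 2 * t
      + re ⟪D x, x⟫_𝕜 := by
    intro t
    have h := hD.re_inner_nonneg_left (x + (t : 𝕜) • D x)
    have hsym : ⟪D (D x), x⟫_𝕜 = ⟪D x, D x⟫_𝕜 := hD.isSymmetric (D x) x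
    simp only [map_add, map_smul, inner_add_left, inner_add_right, inner_smul_left,
      inner_smul_right, conj_ofReal, hsym, re_ofReal_mul, inner_self_eq_norm_sq] at h
    linarith
  have hdisc := discrim_le_zero hquad
  have hDD : re ⟪D (D x), D x⟫_𝕜 ≤ C * ‖D x‖ ^ 2 := hC (D x)
  have hpos : 0 < ‖D x‖ ^ 2 := by positivity
  rw [discrim] at hdisc
  nlinarith [mul_le_mul_of_nonneg_right hDD (hD.re_inner_nonneg_left x)]

theorem summable_apply_of_isPositive [CompleteSpace H] {ι : Type*} {B : ι → H →L[𝕜] H}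
    (hB : ∀ i, (B i).IsPositive) {C : ℝ}
    (hC : ∀ (s : Finset ι) (y : H), ∑ i ∈ s, re ⟪B i y, y⟫_𝕜 ≤ C * ‖y‖ ^ 2) (x : H) :
    Summable fun i => B i x := by
  have hsum_re : Summable fun i => re ⟪B i x, x⟫_𝕜 :=
    summable_of_sum_le (fun i => (hB i).re_inner_nonneg_left x) (fun s => hC s x)
  have hpart : ∀ s : Finset ι, ‖(∑ i ∈ s, B i) x‖ ^ 2 ≤ |C| * ∑ i ∈ s, re ⟪B i x, x⟫_𝕜 := by
    intro s
    have hre : ∀ y, re ⟪(∑ i ∈ s, B i) y, y⟫_𝕜 = ∑ i ∈ s, re ⟪B i y, y⟫_𝕜 := by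
      simp [sum_apply, sum_inner]
    have h := norm_sq_apply_le_of_isPositive (isPositive_sum s fun i _ => hB i)
      (fun y => (hre y).trans_le (hC s y)) x
    rw [hre] at h
    exact h.trans (mul_le_mul_of_nonneg_right (le_abs_self C)
      (Finset.sum_nonneg fun i _ => (hB i).re_inner_nonneg_left x))
  refine summable_iff_vanishing_norm.mpr fun ε hε => ?_
  obtain ⟨s, hs⟩ := summable_iff_vanishing_norm.mp hsum_re (ε ^ 2 / (|C| + 1)) (by positivity)
  refine ⟨s, fun t ht => ?_⟩
  have hsmall : ∑ i ∈ t, re ⟪B i x, x⟫_𝕜 < ε ^ 2 / (|C| + 1) :=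
    (Real.le_norm_self _).trans_lt (hs t ht)
  have hnonneg : 0 ≤ ∑ i ∈ t, re ⟪B i x, x⟫_𝕜 :=
    Finset.sum_nonneg fun i _ => (hB i).re_inner_nonneg_left x
  have hsq : ‖(∑ i ∈ t, B i) x‖ ^ 2 < ε ^ 2 :=
    calc ‖(∑ i ∈ t, B i) x‖ ^ 2 ≤ (|C| + 1) * ∑ i ∈ t, re ⟪B i x, x⟫_𝕜 := by
          nlinarith [hpart t]
      _ < (|C| + 1) * (ε ^ 2 / (|C| + 1)) := by gcongr
      _ = ε ^ 2 := by field_simp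
  rw [← sum_apply]
  exact lt_of_pow_lt_pow_left₀ 2 hε.le hsq

theorem isSymmetric_of_tendsto {α : Type*} {l : Filter α} [l.NeBot] {P : α → H →L[𝕜] H}
    (hP : ∀ m, (P m).IsSymmetric) {Q : H →L[𝕜] H}
    (hQ : ∀ x, Tendsto (fun m => P m x) l (𝓝 (Q x))) : Q.IsSymmetric := fun x y =>
  tendsto_nhds_unique ((hQ x).inner (𝕜 := 𝕜) tendsto_const_nhds)
    (((tendsto_const_nhds (x := x)).inner (hQ y)).congr fun m => (hP m x y).symm)

theorem exists_tendsto_apply_of_antitone [CompleteSpace H] {P : ℕ → H →L[𝕜] H}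
    (hP : ∀ m, 0 ≤ P m) (hanti : Antitone P) :
    ∃ Q : H →L[𝕜] H, ∀ x, Tendsto (fun m => P m x) atTop (𝓝 (Q x)) := by
  have hD : ∀ k, (P k - P (k + 1)).IsPositive := fun k => hanti k.le_succ
  have hre : ∀ k y, re ⟪(P k - P (k + 1)) y, y⟫_𝕜 = re ⟪P k y, y⟫_𝕜 - re ⟪P (k + 1) y, y⟫_𝕜 :=
    fun k y => by simp [sub_apply, inner_sub_left]
  have hbound : ∀ (s : Finset ℕ) (y : H),
      ∑ k ∈ s, re ⟪(P k - P (k + 1)) y, y⟫_𝕜 ≤ ‖P 0‖ * ‖y‖ ^ 2 := by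
    intro s y
    obtain ⟨N, hN⟩ := s.exists_nat_subset_range
    calc ∑ k ∈ s, re ⟪(P k - P (k + 1)) y, y⟫_𝕜
        ≤ ∑ k ∈ Finset.range N, re ⟪(P k - P (k + 1)) y, y⟫_𝕜 :=
          Finset.sum_le_sum_of_subset_of_nonneg hN fun k _ _ => (hD k).re_inner_nonneg_left y
      _ = re ⟪P 0 y, y⟫_𝕜 - re ⟪P N y, y⟫_𝕜 := by
          simp only [hre]
          exact Finset.sum_range_sub' _ N
      _ ≤ ‖P 0 y‖ * ‖y‖ := by
          linarith [((nonneg_iff_isPositive _).mp (hP N)).re_inner_nonneg_left y,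
            re_inner_le_norm (𝕜 := 𝕜) (P 0 y) y]
      _ ≤ ‖P 0‖ * ‖y‖ ^ 2 := by nlinarith [le_opNorm (P 0) y, norm_nonneg y]
  -- `P m = P 0 - ∑_{k < m} (P k - P (k + 1))`
  have hlim : ∀ x, Tendsto (fun m => P m x) atTop
      (𝓝 (P 0 x - ∑' k, (P k - P (k + 1)) x)) := by
    intro x
    simpa only [Finset.sum_range_sub', sub_apply, sub_sub_cancel] using
      ((summable_apply_of_isPositive hD hbound x).hasSum.tendsto_sum_nat).const_sub (P 0 x)
  exact ⟨continuousLinearMapOfTendsto P (tendsto_pi_nhds.mpr hlim), hlim⟩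

end RCLike

section Complex

variable {H : Type*} [NormedAddCommGroup H] [InnerProductSpace ℂ H]

theorem hasSum_inner_of_hasSum_inner_self {ι : Type*} {B : ι → H →L[ℂ] H} {R : H →L[ℂ] H}
    (h : ∀ x, HasSum (fun i => ⟪B i x, x⟫_ℂ) ⟪R x, x⟫_ℂ) (x y : H) :
    HasSum (fun i => ⟪B i x, y⟫_ℂ) ⟪R x, y⟫_ℂ := by
  have hpol := fun T : H →L[ℂ] H => inner_map_polarization' (T : H →ₗ[ℂ] H) x y
  simp only [coe_coe] at hpol
  simp only [hpol]
  exact ((((h _).sub (h _)).sub ((h _).mul_left _)).add ((h _).mul_left _)).div_const _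

theorem isPositive_of_inner_nonneg {T : H →L[ℂ] H} (h : ∀ x, 0 ≤ ⟪T x, x⟫_ℂ) :
    T.IsPositive :=
  (isPositive_iff_complex T).mpr fun x => by
    obtain ⟨r, hr, hrx⟩ := RCLike.nonneg_iff_exists_ofReal.mp (h x)
    simp [← hrx, hr]

theorem hasSum_apply_of_hasSum_re_inner_self [CompleteSpace H] {ι : Type*}
    {B : ι → H →L[ℂ] H} {R : H →L[ℂ] H} (hB : ∀ i, (B i).IsPositive) (hR : R.IsSymmetric)
    (h : ∀ x, HasSum (fun i => re ⟪B i x, x⟫_ℂ) (re ⟪R x, x⟫_ℂ)) (x : H) :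
    HasSum (fun i => B i x) (R x) := by
  have hinner : ∀ x, HasSum (fun i => ⟪B i x, x⟫_ℂ) ⟪R x, x⟫_ℂ := by
    have hreal : ∀ T : H →L[ℂ] H, T.IsSymmetric → ∀ y, ((re ⟪T y, y⟫_ℂ : ℝ) : ℂ) = ⟪T y, y⟫_ℂ :=
      fun T hT => hT.coe_re_inner_apply_self
    intro x
    have hx := Complex.hasSum_ofReal.mpr (h x)
    rwa [hreal R hR, funext fun i => hreal _ (hB i).isSymmetric x] at hx
  have hbound : ∀ (s : Finset ι) (y : H), ∑ i ∈ s, re ⟪B i y, y⟫_ℂ ≤ ‖R‖ * ‖y‖ ^ 2 := by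
    intro s y
    calc ∑ i ∈ s, re ⟪B i y, y⟫_ℂ ≤ re ⟪R y, y⟫_ℂ :=
          sum_le_hasSum s (fun i _ => (hB i).re_inner_nonneg_left y) (h y)
      _ ≤ ‖R y‖ * ‖y‖ := re_inner_le_norm _ _
      _ ≤ ‖R‖ * ‖y‖ ^ 2 := by nlinarith [le_opNorm R y, norm_nonneg y]
  obtain ⟨v, hv⟩ := summable_apply_of_isPositive hB hbound x
  convert hv
  refine ext_inner_right ℂ fun y => ?_
  exact (hasSum_inner_of_hasSum_inner_self hinner x y).unique
    (hv.mapL ((innerSL ℂ).flip y))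

end Complex

section RealSeries

theorem hasSum_of_tsum_ofReal_eq {ι : Type*} {f : ι → ℝ} {r : ℝ} (hf : ∀ i, 0 ≤ f i)
    (hr : 0 ≤ r) (h : ∑' i, ENNReal.ofReal (f i) = ENNReal.ofReal r) : HasSum f r := by
  have hsum : HasSum (fun i => ENNReal.ofReal (f i)) (ENNReal.ofReal r) :=
    h ▸ ENNReal.summable.hasSum
  simpa only [Real.coe_toNNReal _ (hf _), Real.coe_toNNReal _ hr] using
    NNReal.hasSum_coe.mpr (ENNReal.hasSum_coe.mp hsum)

theorem hasSum_sub_succ_of_antitone {u : ℕ → ℝ} (hu : Antitone u) {l : ℝ}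
    (hl : Tendsto u atTop (𝓝 l)) : HasSum (fun m => u m - u (m + 1)) (u 0 - l) := by
  rw [hasSum_iff_tendsto_nat_of_nonneg fun m => sub_nonneg.mpr (hu m.le_succ)]
  simpa only [Finset.sum_range_sub'] using hl.const_sub (u 0)

end RealSeries

section Lists

variable {M : Type*} [Monoid M]

theorem tsum_ite_length_succ (A g : M → ℝ≥0∞) (m : ℕ) :
    ∑' L : List M, (if L.length = m + 1 then (L.map A).prod * g L.prod else 0)
      = ∑' α, A α * ∑' L : List M,
          if L.length = m then (L.map A).prod * g (α * L.prod) else 0 := by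
  set F : List M → ℝ≥0∞ := fun L => if L.length = m + 1 then (L.map A).prod * g L.prod else 0
  have hcons : Function.Injective fun p : M × List M => p.1 :: p.2 := fun p q h => by
    simpa [Prod.ext_iff] using h
  have hsupp : Function.support F ⊆ Set.range fun p : M × List M => p.1 :: p.2 := by
    rintro (_ | ⟨α, L⟩) hL
    · simp [F] at hL
    · exact ⟨(α, L), rfl⟩
  rw [← hcons.tsum_eq hsupp, ENNReal.tsum_prod (f := fun α L => F (α :: L))]
  refine tsum_congr fun α => ?_
  rw [← ENNReal.tsum_mul_left]
  refine tsum_congr fun L => ?_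
  simp only [F, List.length_cons, List.map_cons, List.prod_cons, Nat.add_right_cancel_iff,
    mul_ite, mul_zero, mul_assoc]

theorem tsum_prod_map_mul_eq_tsum_factorizations (A g : M → ℝ≥0∞) (hA : A 1 = 0) :
    ∑' L : List M, (L.map A).prod * g L.prod
      = ∑' γ, (∑' L : {L : List M // L.prod = γ ∧ ∀ w ∈ L, w ≠ 1}, (L.1.map A).prod) * g γ := by
  classical
  have hsplit : ∀ L : List M, (L.map A).prod * g L.prod
      = ∑' γ, if L.prod = γ ∧ ∀ w ∈ L, w ≠ 1 then (L.map A).prod * g γ else 0 := by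
    intro L
    by_cases hL : ∀ w ∈ L, w ≠ 1
    · simp only [eq_true hL, and_true, @eq_comm _ L.prod, tsum_ite_eq]
    · push Not at hL
      obtain ⟨w, hw, rfl⟩ := hL
      have : (L.map A).prod = 0 := List.prod_eq_zero (hA ▸ List.mem_map_of_mem hw)
      simp [this]
  simp only [hsplit, ← ENNReal.tsum_mul_right]
  rw [ENNReal.tsum_comm]
  refine tsum_congr fun γ => ?_
  refine Eq.trans ?_ (tsum_subtype {L : List M | L.prod = γ ∧ ∀ w ∈ L, w ≠ 1}
    fun L => (L.map A).prod * g γ).symm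
  simp only [Set.indicator_apply, Set.mem_ofPred_eq]

end Lists

section Factorizations

variable {n : ℕ}

theorem eq_nil_of_prod_eq_one {L : List (Word n)} (hL : L.prod = 1) (hne : ∀ w ∈ L, w ≠ 1) :
    L = [] := by
  have h := congrArg FreeMonoid.toList hL
  rw [FreeMonoid.toList_prod, FreeMonoid.toList_one, List.flatten_eq_nil_iff] at h
  refine List.eq_nil_iff_forall_not_mem.mpr fun w hw => hne w hw ?_
  exact FreeMonoid.toList.injective (h _ (List.mem_map_of_mem hw))

theorem finite_factorizations (γ : Word n) :
    Finite {L : List (Word n) // L.prod = γ ∧ ∀ w ∈ L, w ≠ 1} := by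
  have hlen : ∀ L : List (Word n), (L.map FreeMonoid.toList).map List.length = L.map wordLen :=
    fun L => by simp [Function.comp_def, wordLen, FreeMonoid.length]
  let blocks (L : {L : List (Word n) // L.prod = γ ∧ ∀ w ∈ L, w ≠ 1}) :
      Composition (wordLen γ) :=
    { blocks := L.1.map wordLen
      blocks_pos := by
        intro i hi
        obtain ⟨w, hw, rfl⟩ := List.mem_map.mp hi
        exact Nat.pos_of_ne_zero (mt FreeMonoid.length_eq_zero.mp (L.2.2 w hw))
      blocks_sum := by
        rw [← hlen, ← List.length_flatten, ← FreeMonoid.toList_prod, L.2.1]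
        rfl }
  refine Finite.of_injective blocks fun L₁ L₂ h => Subtype.ext ?_
  refine List.map_injective_iff.mpr FreeMonoid.toList.injective ?_
  rw [List.eq_iff_flatten_eq, ← FreeMonoid.toList_prod, ← FreeMonoid.toList_prod, L₁.2.1, L₂.2.1,
    hlen, hlen]
  exact ⟨rfl, congrArg Composition.blocks h⟩

theorem bCoeff_eq_tsum (a : Word n → ℝ) (γ : Word n) :
    bCoeff a γ = ∑' L : {L : List (Word n) // L.prod = γ ∧ ∀ w ∈ L, w ≠ 1}, (L.1.map a).prod := by
  unfold bCoeff
  split_ifs with hγ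
  · subst hγ
    rw [tsum_eq_single ⟨[], rfl, by simp⟩]
    · rfl
    · exact fun L hL => absurd (Subtype.ext (eq_nil_of_prod_eq_one L.2.1 L.2.2)) hL
  · rfl

theorem ofReal_list_prod_map {ι : Type*} (f : ι → ℝ) (hf : ∀ i, 0 ≤ f i) (L : List ι) :
    ENNReal.ofReal (L.map f).prod = (L.map fun i => ENNReal.ofReal (f i)).prod := by
  induction L with
  | nil => simp
  | cons i L ih => simp [ENNReal.ofReal_mul (hf i), ih]

theorem ofReal_bCoeff (a : Word n → ℝ) (ha : ∀ α, 0 ≤ a α) (γ : Word n) :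
    ENNReal.ofReal (bCoeff a γ) = ∑' L : {L : List (Word n) // L.prod = γ ∧ ∀ w ∈ L, w ≠ 1},
      (L.1.map fun α => ENNReal.ofReal (a α)).prod := by
  have := finite_factorizations γ
  rw [bCoeff_eq_tsum, ENNReal.ofReal_tsum_of_nonneg
    (fun L => List.prod_nonneg (List.forall_mem_map.mpr fun α _ => ha α)) Summable.of_finite]
  exact tsum_congr fun L => ofReal_list_prod_map a ha L.1

theorem bCoeff_nonneg (a : Word n → ℝ) (ha : ∀ α, 0 ≤ a α) (γ : Word n) : 0 ≤ bCoeff a γ := by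
  rw [bCoeff_eq_tsum]
  exact tsum_nonneg fun L => List.prod_nonneg (List.forall_mem_map.mpr fun α _ => ha α)

end Factorizations

section Phi

variable {n : ℕ} {H : Type*} [NormedAddCommGroup H] [InnerProductSpace ℂ H] [CompleteSpace H]

theorem adjoint_opWord_mul_apply (T : Fin n → H →L[ℂ] H) (α β : Word n) (x : H) :
    (opWord T (α * β)).adjoint x = (opWord T β).adjoint ((opWord T α).adjoint x) := by
  simp only [opWord, FreeMonoid.toList_mul, List.map_append, List.prod_append, mul_def,
    adjoint_comp, coe_comp, Function.comp_apply]

variable {a : Word n → ℝ} {T : Fin n → H →L[ℂ] H} {Φ : (H →L[ℂ] H) → (H →L[ℂ] H)}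

namespace IsPhi

theorem hasSum_inner_adjoint (hΦ : IsPhi a T Φ) (X : H →L[ℂ] H) (x y : H) :
    HasSum (fun α : {β : Word n // β ≠ 1} =>
      (a α.1 : ℂ) * ⟪X ((opWord T α.1).adjoint x), (opWord T α.1).adjoint y⟫_ℂ) ⟪Φ X x, y⟫_ℂ := by
  simpa only [adjoint_inner_right] using hΦ X x y

theorem map_sub (hΦ : IsPhi a T Φ) (X Y : H →L[ℂ] H) : Φ (X - Y) = Φ X - Φ Y := by
  ext x
  refine ext_inner_right ℂ fun y => ?_
  rw [sub_apply, inner_sub_left]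
  refine (hΦ (X - Y) x y).unique ?_
  simpa only [sub_apply, _root_.map_sub, inner_sub_left, mul_sub] using (hΦ X x y).sub (hΦ Y x y)

theorem iterate_map_sub (hΦ : IsPhi a T Φ) (m : ℕ) (X Y : H →L[ℂ] H) :
    Φ^[m] (X - Y) = Φ^[m] X - Φ^[m] Y := by
  induction m generalizing X Y with
  | zero => rfl
  | succ m ih => simp only [Function.iterate_succ_apply, hΦ.map_sub, ih]

theorem isPositive (hΦ : IsPhi a T Φ) (ha : ∀ α, 0 ≤ a α) {X : H →L[ℂ] H} (hX : X.IsPositive) :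
    (Φ X).IsPositive :=
  isPositive_of_inner_nonneg fun x => (hΦ.hasSum_inner_adjoint X x x).nonneg
    fun _ => mul_nonneg (Complex.zero_le_real.mpr (ha _)) (hX.inner_nonneg_left _)

theorem monotone (hΦ : IsPhi a T Φ) (ha : ∀ α, 0 ≤ a α) : Monotone Φ := fun X Y hXY => by
  rw [ContinuousLinearMap.le_def, ← hΦ.map_sub]
  exact hΦ.isPositive ha hXY

theorem iterate_isPositive (hΦ : IsPhi a T Φ) (ha : ∀ α, 0 ≤ a α) {X : H →L[ℂ] H}
    (hX : X.IsPositive) (m : ℕ) : (Φ^[m] X).IsPositive := by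
  induction m with
  | zero => exact hX
  | succ m ih => exact Function.iterate_succ_apply' Φ m X ▸ hΦ.isPositive ha ih

theorem antitone_iterate (hΦ : IsPhi a T Φ) (ha : ∀ α, 0 ≤ a α) {X : H →L[ℂ] H}
    (hX : Φ X ≤ X) : Antitone fun m => Φ^[m] X :=
  antitone_nat_of_succ_le fun m => by
    simpa only [Function.iterate_succ_apply] using (hΦ.monotone ha).iterate m hX

theorem ofReal_re_inner_apply_self (hΦ : IsPhi a T Φ) (ha : ∀ α, 0 ≤ a α) (ha1 : a 1 = 0)
    {X : H →L[ℂ] H} (hX : X.IsPositive) (x : H) :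
    ENNReal.ofReal (re ⟪Φ X x, x⟫_ℂ) = ∑' α, ENNReal.ofReal (a α) *
      ENNReal.ofReal (re ⟪X ((opWord T α).adjoint x), (opWord T α).adjoint x⟫_ℂ) := by
  have h : HasSum (fun α : {β : Word n // β ≠ 1} =>
      a α.1 * re ⟪X ((opWord T α.1).adjoint x), (opWord T α.1).adjoint x⟫_ℂ) (re ⟪Φ X x, x⟫_ℂ) := by
    simpa using RCLike.hasSum_re ℂ (hΦ.hasSum_inner_adjoint X x x)
  have hsupp : Function.support (fun α => ENNReal.ofReal (a α) *
      ENNReal.ofReal (re ⟪X ((opWord T α).adjoint x), (opWord T α).adjoint x⟫_ℂ)) ⊆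
      {β | β ≠ 1} := by
    rintro α hα rfl
    simp [ha1] at hα
  rw [← h.tsum_eq, ENNReal.ofReal_tsum_of_nonneg
    (fun α => mul_nonneg (ha _) (hX.re_inner_nonneg_left _)) h.summable,
    ← tsum_subtype_eq_of_support_subset hsupp]
  exact tsum_congr fun α => ENNReal.ofReal_mul (ha _)

theorem ofReal_re_inner_iterate_apply_self (hΦ : IsPhi a T Φ) (ha : ∀ α, 0 ≤ a α)
    (ha1 : a 1 = 0) {X : H →L[ℂ] H} (hX : X.IsPositive) (m : ℕ) (x : H) :
    ENNReal.ofReal (re ⟪Φ^[m] X x, x⟫_ℂ) = ∑' L : List (Word n), if L.length = m then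
      (L.map fun α => ENNReal.ofReal (a α)).prod *
        ENNReal.ofReal (re ⟪X ((opWord T L.prod).adjoint x), (opWord T L.prod).adjoint x⟫_ℂ)
      else 0 := by
  induction m generalizing x with
  | zero =>
    rw [tsum_eq_single []]
    · simp [opWord, ← star_eq_adjoint]
    · intro L hL
      simp [hL]
  | succ m ih =>
    rw [Function.iterate_succ_apply',
      hΦ.ofReal_re_inner_apply_self ha ha1 (hΦ.iterate_isPositive ha hX m),
      tsum_ite_length_succ _ fun γ =>
        ENNReal.ofReal (re ⟪X ((opWord T γ).adjoint x), (opWord T γ).adjoint x⟫_ℂ)]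
    simp only [ih, adjoint_opWord_mul_apply]

theorem hasSum_re_inner_iterate (hΦ : IsPhi a T Φ) (ha : ∀ α, 0 ≤ a α)
    (hdom : ((1 : H →L[ℂ] H) - Φ 1).IsPositive) {Q : H →L[ℂ] H}
    (hQ : ∀ x, Tendsto (fun m => Φ^[m] 1 x) atTop (𝓝 (Q x))) (x : H) :
    HasSum (fun m => re ⟪Φ^[m] (1 - Φ 1) x, x⟫_ℂ) (re ⟪(1 - Q) x, x⟫_ℂ) := by
  set u : ℕ → ℝ := fun m => re ⟪Φ^[m] 1 x, x⟫_ℂ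
  have hu : Antitone u := fun k m hkm => by
    simpa [u, inner_sub_left] using (hΦ.antitone_iterate ha hdom hkm).re_inner_nonneg_left x
  have hlim : Tendsto u atTop (𝓝 (re ⟪Q x, x⟫_ℂ)) :=
    (RCLike.continuous_re.tendsto _).comp ((hQ x).inner tendsto_const_nhds)
  convert hasSum_sub_succ_of_antitone hu hlim using 1
  · ext m
    simp [u, hΦ.iterate_map_sub, Function.iterate_succ_apply]
  · simp [u]

theorem hasSum_bCoeff_mul_re_inner (hΦ : IsPhi a T Φ) (ha : ∀ α, 0 ≤ a α) (ha1 : a 1 = 0)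
    (hdom : ((1 : H →L[ℂ] H) - Φ 1).IsPositive) {Q : H →L[ℂ] H}
    (hQ : ∀ x, Tendsto (fun m => Φ^[m] 1 x) atTop (𝓝 (Q x))) (x : H) :
    HasSum (fun β => bCoeff a β *
        re ⟪(1 - Φ 1) ((opWord T β).adjoint x), (opWord T β).adjoint x⟫_ℂ)
      (re ⟪(1 - Q) x, x⟫_ℂ) := by
  set S : H →L[ℂ] H := 1 - Φ 1
  have htel := hΦ.hasSum_re_inner_iterate ha hdom hQ x
  have hterm : ∀ m, 0 ≤ re ⟪Φ^[m] S x, x⟫_ℂ := fun m =>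
    (hΦ.iterate_isPositive ha hdom m).re_inner_nonneg_left x
  have hb : ∀ β, 0 ≤ bCoeff a β := bCoeff_nonneg a ha
  refine hasSum_of_tsum_ofReal_eq (fun β => mul_nonneg (hb β) (hdom.re_inner_nonneg_left _))
    (htel.nonneg hterm) ?_
  calc ∑' β, ENNReal.ofReal (bCoeff a β *
        re ⟪S ((opWord T β).adjoint x), (opWord T β).adjoint x⟫_ℂ)
      = ∑' L : List (Word n), (L.map fun α => ENNReal.ofReal (a α)).prod *
          ENNReal.ofReal (re ⟪S ((opWord T L.prod).adjoint x), (opWord T L.prod).adjoint x⟫_ℂ) := by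
        rw [tsum_prod_map_mul_eq_tsum_factorizations _ (fun γ => ENNReal.ofReal
          (re ⟪S ((opWord T γ).adjoint x), (opWord T γ).adjoint x⟫_ℂ)) (by simp [ha1])]
        simp only [ENNReal.ofReal_mul (hb _), ofReal_bCoeff a ha]
    _ = ∑' m, ENNReal.ofReal (re ⟪Φ^[m] S x, x⟫_ℂ) := by
        simp only [hΦ.ofReal_re_inner_iterate_apply_self ha ha1 hdom]
        rw [ENNReal.tsum_comm]
        simp
    _ = ENNReal.ofReal (re ⟪(1 - Q) x, x⟫_ℂ) := by
        rw [← ENNReal.ofReal_tsum_of_nonneg hterm htel.summable, htel.tsum_eq]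

end IsPhi

end Phi

/-- for `T ∈ D_f(H)` (i.e. `Φ_{f,T}(I) ≤ I`), the sequence `Φ_{f,T}^m(I)` is
decreasing, the limit `Q = SOT-lim_m Φ_{f,T}^m(I)` exists, and
`Σ_β b_β T_β (I − Φ_{f,T}(I)) T_β* = I − Q` in the strong operator topology. -/
theorem phi_iterates_decrease_and_limit {n : ℕ} {H : Type*} [NormedAddCommGroup H]
    [InnerProductSpace ℂ H] [CompleteSpace H]
    (a : Word n → ℝ) (hreg : PosRegular a)
    (T : Fin n → H →L[ℂ] H) (Φ : (H →L[ℂ] H) → (H →L[ℂ] H))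
    (hΦ : IsPhi a T Φ)
    (hdom : ((1 : H →L[ℂ] H) - Φ 1).IsPositive) :
    (∀ m : ℕ, (Φ^[m] 1 - Φ^[m + 1] 1).IsPositive) ∧
    ∃ Q : H →L[ℂ] H,
      (∀ x : H, Tendsto (fun m => (Φ^[m] 1) x) atTop (𝓝 (Q x))) ∧
      ∀ x : H,
        HasSum (fun β : Word n =>
            (bCoeff a β : ℂ) •
              opWord T β (((1 : H →L[ℂ] H) - Φ 1) ((opWord T β).adjoint x)))
          (x - Q x) := by
  obtain ⟨ha1, ha, -, -⟩ := hreg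
  have hpos : ∀ m, (Φ^[m] 1).IsPositive := hΦ.iterate_isPositive ha isPositive_one
  have hanti : Antitone fun m => Φ^[m] 1 := hΦ.antitone_iterate ha hdom
  obtain ⟨Q, hQ⟩ := exists_tendsto_apply_of_antitone
    (fun m => (nonneg_iff_isPositive _).mpr (hpos m)) hanti
  have hQ_symm : Q.IsSymmetric := isSymmetric_of_tendsto (fun m => (hpos m).isSymmetric) hQ
  let B : Word n → H →L[ℂ] H := fun β =>
    (bCoeff a β : ℂ) • (opWord T β ∘L (1 - Φ 1) ∘L (opWord T β).adjoint)
  have hB : ∀ β, (B β).IsPositive := fun β =>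
    (hdom.conj_adjoint (opWord T β)).smul_of_nonneg
      (Complex.zero_le_real.mpr (bCoeff_nonneg a ha β))
  have hR : (1 - Q).IsSymmetric := fun x y => by
    simpa [inner_sub_left, inner_sub_right] using hQ_symm x y
  have hBQ : ∀ x, HasSum (fun β => re ⟪B β x, x⟫_ℂ) (re ⟪(1 - Q) x, x⟫_ℂ) := fun x => by
    convert hΦ.hasSum_bCoeff_mul_re_inner ha ha1 hdom hQ x using 2 with β
    rw [smul_apply, inner_smul_left, comp_apply, ← adjoint_inner_right]
    simp only [RCLike.re_to_complex, Complex.conj_ofReal, Complex.re_ofReal_mul, comp_apply]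
  exact ⟨fun m => hanti m.le_succ, Q, hQ, hasSum_apply_of_hasSum_re_inner_self hB hR hBQ⟩

end NCDomain
end
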